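/- arXiv:1412.3054 — 3 statements merged into one kernel-verified Lean document; each statement's English description precedes it below -/
import Mathlib

section
/- Let n > 1 be a non-prime integer whose smallest prime factor is at most the number of its distinct prime factors. Then no clique of G_{ℤ/nℤ} dominates G_{ℤ/nℤ}; i.e., the clique domination number of G_{ℤ/nℤ} does not exist. -/
/-!
Reducing modulo the smallest prime `p` of `n` is injective on a clique, so a clique has at most
`p ≤ ω(n)` vertices. Attaching a distinct prime divisor `q_w` of `n` to each clique vertex `w`,
the Chinese remainder theorem gives `v` with `v ≡ w (mod q_w)` for all `w`, so `v` is adjacent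
to no clique vertex. A dominating clique must then be `{v}`, and a single vertex dominates only
when every nonzero element is a unit, which fails in `ℤ/nℤ` for composite `n`.
-/

/-- The unitary Cayley graph of a commutative ring: `a` is adjacent to `b`
iff `a ≠ b` and `a - b` is a unit. -/
def unitaryCayley (X : Type*) [CommRing X] : SimpleGraph X where
  Adj a b := a ≠ b ∧ IsUnit (a - b)
  symm := by
    constructor
    rintro a b ⟨h1, h2⟩
    exact ⟨h1.symm, neg_sub a b ▸ h2.neg⟩
  loopless := by constructor; rintro a ⟨h, _⟩; exact h rfl

/-- A set of vertices dominates a graph if every vertex is in the set or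
adjacent to a member of the set. -/
def Dominates {V : Type*} (G : SimpleGraph V) (s : Finset V) : Prop :=
  ∀ v, v ∈ s ∨ ∃ w ∈ s, G.Adj v w

section UnitaryCayley

variable {R : Type*} [CommRing R]

theorem not_isUnit_of_map_eq_zero {S : Type*} [CommRing S] [Nontrivial S] (f : R →+* S)
    {x : R} (hx : f x = 0) : ¬IsUnit x :=
  fun hu => not_isUnit_zero (hx ▸ hu.map f)

theorem SimpleGraph.IsClique.injOn_of_unitaryCayley {S : Type*} [CommRing S] [Nontrivial S]
    (f : R →+* S) {s : Set R} (hs : (unitaryCayley R).IsClique s) : Set.InjOn f s := by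
  intro a ha b hb hab
  by_contra hne
  exact not_isUnit_of_map_eq_zero f (by rw [map_sub, hab, sub_self]) (hs ha hb hne).2

theorem Dominates.eq_singleton_of_isClique {s : Finset R}
    (hdom : Dominates (unitaryCayley R) s) (hs : (unitaryCayley R).IsClique (s : Set R))
    {v : R} (hv : ∀ w ∈ s, ¬IsUnit (v - w)) : s = {v} := by
  have hvs : v ∈ s := by
    rcases hdom v with hvs | ⟨w, hw, hadj⟩
    · exact hvs
    · exact absurd hadj.2 (hv w hw)
  refine Finset.eq_singleton_iff_unique_mem.2 ⟨hvs, fun w hw => ?_⟩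
  by_contra hne
  exact hv w hw (hs hvs hw (Ne.symm hne)).2

theorem Dominates.isUnit_of_singleton {v : R} (hdom : Dominates (unitaryCayley R) {v})
    {x : R} (hx : x ≠ 0) : IsUnit x := by
  rcases hdom (v + x) with hvx | ⟨w, hw, hadj⟩
  · exact absurd (by simpa using hvx) hx
  · rw [Finset.mem_singleton] at hw
    simpa [hw] using hadj.2

end UnitaryCayley

namespace ZMod

theorem card_le_of_isClique_of_prime_dvd {n p : ℕ} (hp : p.Prime) (hpn : p ∣ n)
    {s : Finset (ZMod n)} (hs : (unitaryCayley (ZMod n)).IsClique (s : Set (ZMod n))) :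
    s.card ≤ p := by
  have : Fact p.Prime := ⟨hp⟩
  calc s.card ≤ Fintype.card (ZMod p) :=
        Finset.card_le_card_of_injOn _ (fun _ _ => Finset.mem_coe.2 (Finset.mem_univ _))
          (hs.injOn_of_unitaryCayley (castHom hpn (ZMod p)))
    _ = p := card p

theorem exists_forall_not_isUnit_sub {n : ℕ} [NeZero n] (s : Finset (ZMod n))
    (hs : s.card ≤ n.primeFactors.card) : ∃ v : ZMod n, ∀ w ∈ s, ¬IsUnit (v - w) := by
  obtain ⟨q, hq_mem, hq_inj⟩ := s.finite_toSet.exists_injOn_of_encard_le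
    (t := (n.primeFactors : Set ℕ)) (by simpa using hs)
  have hq_prime : ∀ w ∈ s, (q w).Prime := fun w hw => Nat.prime_of_mem_primeFactors (hq_mem hw)
  obtain ⟨V, hV⟩ := Nat.chineseRemainderOfFinset (fun w => w.val) q s
    (fun w hw => (hq_prime w hw).ne_zero)
    (fun a ha b hb hab =>
      (Nat.coprime_primes (hq_prime a ha) (hq_prime b hb)).2 (hq_inj.ne ha hb hab))
  refine ⟨V, fun w hw => ?_⟩
  have : Fact (q w).Prime := ⟨hq_prime w hw⟩
  refine not_isUnit_of_map_eq_zero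
    (castHom (Nat.dvd_of_mem_primeFactors (hq_mem hw)) (ZMod (q w))) ?_
  rw [map_sub, map_natCast, castHom_apply, ← natCast_val,
    (natCast_eq_natCast_iff _ _ _).2 (hV w hw), sub_self]

theorem exists_ne_zero_not_isUnit {n : ℕ} (hn : 1 < n) (hnp : ¬n.Prime) :
    ∃ x : ZMod n, x ≠ 0 ∧ ¬IsUnit x := by
  have hp : n.minFac.Prime := Nat.minFac_prime (by omega)
  refine ⟨n.minFac, fun h0 => ?_, (isUnit_prime_iff_not_dvd hp).not_left.2 n.minFac_dvd⟩
  have hle : n ≤ n.minFac := Nat.le_of_dvd hp.pos ((natCast_eq_zero_iff _ _).1 h0)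
  exact hnp (le_antisymm (Nat.minFac_le (by omega)) hle ▸ hp)

end ZMod

theorem unitaryCayley_no_dominating_clique (n : ℕ) (hn : 1 < n) (hnp : ¬ n.Prime)
    (h : n.minFac ≤ n.primeFactors.card) :
    ∀ s : Finset (ZMod n), (unitaryCayley (ZMod n)).IsClique (s : Set (ZMod n)) →
      ¬ Dominates (unitaryCayley (ZMod n)) s := by
  intro s hclique hdom
  have : NeZero n := ⟨by omega⟩
  have hcard : s.card ≤ n.primeFactors.card :=
    (ZMod.card_le_of_isClique_of_prime_dvd (Nat.minFac_prime (by omega)) n.minFac_dvd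
      hclique).trans h
  obtain ⟨v, hv⟩ := ZMod.exists_forall_not_isUnit_sub s hcard
  obtain ⟨x, hx0, hxu⟩ := ZMod.exists_ne_zero_not_isUnit hn hnp
  exact hxu ((hdom.eq_singleton_of_isClique hclique hv ▸ hdom).isUnit_of_singleton hx0)
end

section
/- For an integer n ≥ 3, the girth of the unitary Cayley graph G_{ℤ/nℤ} is 3 if n is odd, 6 if n = 6, and 4 if n is even and n ≠ 6. -/
/-
When `n` is even, reduction modulo 2 is a proper 2-colouring of `G_{ℤ/nℤ}`, so every cycle is
even and has length at least 4. Short cycles are found as follows: the path `0, 1, …, k - 1` closes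
up into a `k`-cycle as soon as `k - 1` is a unit (`k = 3` for odd `n`, `k = 4` when `3 ∤ n`,
`k = 6` for `n = 6`); when `6 ∣ n` and `n > 6` we have `φ n ≥ φ 3 * φ (n / 3) > 2`, so there is
a unit `u ≠ ±1` and `0, u, u + 1, 1` is a 4-cycle. For `n = 6` the only units are `±1`, which
leaves no room for a 4-cycle.
-/

open SimpleGraph Function

namespace SimpleGraph

variable {V : Type*} {G : SimpleGraph V}

theorem girth_eq_of_cycleGraph_isContained {k : ℕ} (hk : 2 < k) (hC : cycleGraph k ⊑ G)
    (hle : ∀ (v : V) (p : G.Walk v v), p.IsCycle → k ≤ p.length) : G.girth = k := by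
  obtain ⟨v, p, hp, rfl⟩ := (cycleGraph_isContained_iff hk).mp hC
  obtain ⟨w, q, hq, hgirth⟩ := exists_girth_eq_length.mpr fun hacyclic => hacyclic p hp
  exact le_antisymm (girth_le_length hp) (hgirth ▸ hle w q hq)

theorem cycleGraph_isContained_of_adj_succ {m : ℕ} (f : Fin (m + 2) → V) (hf : Injective f)
    (hadj : ∀ i, G.Adj (f i) (f (i + 1))) : cycleGraph (m + 2) ⊑ G := by
  refine ⟨Hom.toCopy ⟨f, fun {i j} hij => ?_⟩ hf⟩
  rcases cycleGraph_adj.mp hij with h | h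
  · rw [sub_eq_iff_eq_add'] at h
    exact h ▸ (hadj j).symm
  · rw [sub_eq_iff_eq_add'] at h
    exact h ▸ hadj i

theorem Walk.IsCycle.four_le_length_of_colorable_two (h2 : G.Colorable 2) {v : V}
    {p : G.Walk v v} (hp : p.IsCycle) : 4 ≤ p.length := by
  obtain ⟨r, hr⟩ := two_colorable_iff_forall_loop_even.mp h2 v p
  have := hp.three_le_length
  omega

theorem Walk.IsCycle.six_le_length_of_colorable_two (h2 : G.Colorable 2)
    (h4 : ¬ cycleGraph 4 ⊑ G) {v : V} {p : G.Walk v v} (hp : p.IsCycle) : 6 ≤ p.length := by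
  have hne : p.length ≠ 4 := fun h =>
    h4 ((cycleGraph_isContained_iff (by norm_num)).mpr ⟨v, p, hp, h⟩)
  obtain ⟨r, hr⟩ := two_colorable_iff_forall_loop_even.mp h2 v p
  have := hp.four_le_length_of_colorable_two h2
  omega

end SimpleGraph

theorem Nat.two_lt_totient_of_three_dvd {n : ℕ} (h3 : 3 ∣ n) (h6 : 6 < n) : 2 < n.totient := by
  obtain ⟨m, rfl⟩ := h3
  have hm : 2 < m := by omega
  have hφm : 2 ≤ m.totient := by
    obtain ⟨r, hr⟩ := Nat.totient_even hm
    have := Nat.totient_pos.mpr (by omega : 0 < m)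
    omega
  calc 2 < Nat.totient 3 * m.totient := by rw [Nat.totient_prime Nat.prime_three]; omega
    _ ≤ (3 * m).totient := Nat.totient_super_multiplicative 3 m

theorem ZMod.exists_unit_ne_one_ne_neg_one {n : ℕ} [NeZero n] (h : 2 < n.totient) :
    ∃ u : ZMod n, IsUnit u ∧ u ≠ 1 ∧ u ≠ -1 := by
  have hcard : ({1, -1} : Finset (ZMod n)ˣ).card < (Finset.univ : Finset (ZMod n)ˣ).card := by
    rw [Finset.card_univ, ZMod.card_units_eq_totient]
    exact (Finset.card_le_two : ({1, -1} : Finset (ZMod n)ˣ).card ≤ 2).trans_lt h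
  obtain ⟨u, -, hu⟩ := Finset.exists_mem_notMem_of_card_lt_card hcard
  simp only [Finset.mem_insert, Finset.mem_singleton, not_or] at hu
  exact ⟨u, u.isUnit, fun h => hu.1 (Units.ext h), fun h => hu.2 (Units.ext (by simpa using h))⟩

namespace unitaryCayley

variable {R : Type*} [CommRing R]

def coloringOfRingHom {S : Type*} [CommRing S] [Nontrivial S] (f : R →+* S) :
    (unitaryCayley R).Coloring S :=
  Coloring.mk f fun hab => sub_ne_zero.mp (map_sub f _ _ ▸ (hab.2.map f).ne_zero)

theorem colorable_two_zmod {n : ℕ} (h2 : 2 ∣ n) : (unitaryCayley (ZMod n)).Colorable 2 := by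
  simpa using (coloringOfRingHom (ZMod.castHom h2 (ZMod 2))).colorable

theorem adj_iff [Nontrivial R] {a b : R} : (unitaryCayley R).Adj a b ↔ IsUnit (a - b) :=
  ⟨And.right, fun h => ⟨sub_ne_zero.mp h.ne_zero, h⟩⟩

theorem cycleGraph_four_isContained [Nontrivial R] {u v : R} (hu : IsUnit u) (hv : IsUnit v)
    (huv : u ≠ v) (hneg : u ≠ -v) : cycleGraph 4 ⊑ unitaryCayley R := by
  refine cycleGraph_isContained_of_adj_succ ![0, u, u + v, v] ?_ fun i => ?_
  · have hu0 := hu.ne_zero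
    have hv0 := hv.ne_zero
    have hsum : u + v ≠ 0 := fun h => hneg (eq_neg_of_add_eq_zero_left h)
    intro i j hij
    fin_cases i <;> fin_cases j <;> simp_all [eq_comm (a := (0 : R))]
  · fin_cases i <;> simp [adj_iff, hu, hv]

theorem cycleGraph_isContained_zmod {n m : ℕ} (hmn : m + 2 ≤ n) (hcop : (m + 1).Coprime n) :
    cycleGraph (m + 2) ⊑ unitaryCayley (ZMod n) := by
  have : Nontrivial (ZMod n) := ZMod.nontrivial_iff.mpr (by omega)
  refine cycleGraph_isContained_of_adj_succ (fun i => ((i : ℕ) : ZMod n)) ?_ fun i => ?_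
  · intro i j hij
    rw [ZMod.natCast_eq_natCast_iff', Nat.mod_eq_of_lt (by omega),
      Nat.mod_eq_of_lt (by omega)] at hij
    exact Fin.ext hij
  · rw [adj_iff, Fin.val_add_one]
    split_ifs with hi
    · simpa [hi] using (ZMod.isUnit_iff_coprime (m + 1) n).mpr hcop
    · push_cast
      simp

theorem not_cycleGraph_four_isContained_zmod_six :
    ¬ cycleGraph 4 ⊑ unitaryCayley (ZMod 6) := by
  rintro ⟨e⟩
  have hadj {i j : Fin 4} (h : (cycleGraph 4).Adj i j) : IsUnit (e i - e j) :=
    (e.toHom.map_adj h).2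
  have key : ∀ a b c d : ZMod 6, IsUnit (a - b) → IsUnit (b - c) → IsUnit (c - d) →
      IsUnit (d - a) → a ≠ c → b ≠ d → False := by
    -- `IsUnit` is not decidable as stated, but `∃ b, a * b = 1` over a finite ring is
    simp only [isUnit_iff_exists_inv]
    decide
  exact key _ _ _ _ (hadj (by decide)) (hadj (by decide)) (hadj (by decide)) (hadj (by decide))
    (e.injective.ne (by decide : (0 : Fin 4) ≠ 2)) (e.injective.ne (by decide : (1 : Fin 4) ≠ 3))

end unitaryCayley

theorem unitaryCayley_girth (n : ℕ) (hn : 3 ≤ n) :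
    (unitaryCayley (ZMod n)).girth =
      if Odd n then 3 else if n = 6 then 6 else 4 := by
  rcases Nat.even_or_odd n with heven | hodd
  · have h2 := unitaryCayley.colorable_two_zmod heven.two_dvd
    rw [if_neg (Nat.not_odd_iff_even.mpr heven)]
    split_ifs with h6
    · subst h6
      exact girth_eq_of_cycleGraph_isContained (by norm_num)
        (unitaryCayley.cycleGraph_isContained_zmod (m := 4) le_rfl (by norm_num))
        fun _ _ hp => hp.six_le_length_of_colorable_two h2
          unitaryCayley.not_cycleGraph_four_isContained_zmod_six
    refine girth_eq_of_cycleGraph_isContained (by norm_num) ?_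
      fun _ _ hp => hp.four_le_length_of_colorable_two h2
    by_cases h3 : 3 ∣ n
    · have : Fact (1 < n) := ⟨by omega⟩
      have h6lt : 6 < n := by obtain ⟨r, rfl⟩ := heven; omega
      obtain ⟨u, hu, hu1, hu_neg⟩ :=
        ZMod.exists_unit_ne_one_ne_neg_one (Nat.two_lt_totient_of_three_dvd h3 h6lt)
      exact unitaryCayley.cycleGraph_four_isContained hu isUnit_one hu1 hu_neg
    · exact unitaryCayley.cycleGraph_isContained_zmod (m := 2) (by omega)
        ((Nat.Prime.coprime_iff_not_dvd Nat.prime_three).mpr h3)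
  · rw [if_pos hodd]
    exact girth_eq_of_cycleGraph_isContained (by norm_num)
      (unitaryCayley.cycleGraph_isContained_zmod (m := 1) hn (Nat.coprime_two_left.mpr hodd))
      fun _ _ hp => hp.three_le_length
end

section
/- Let n > 1 be an integer with prime factorization n = ∏_{i=1}^t p_i^{α_i}, and let a, b be integers. The number of common neighbors of a and b in the unitary Cayley graph G_{ℤ/nℤ} equals n · ∏_{i=1}^t (1 - ε_i/p_i), where ε_i = 1 if p_i divides a - b and ε_i = 2 otherwise. -/
theorem AddMonoidHom.card_subtype_comp_of_surjective {G H : Type*} [AddGroup G] [AddGroup H]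
    [Finite G] {f : G →+ H} (hf : Function.Surjective f) (P : H → Prop) :
    Nat.card {g : G // P (f g)} = Nat.card {h : H // P h} * Nat.card f.ker := by
  have : Fintype H := have := Finite.of_surjective f hf; .ofFinite H
  classical
  rw [← Nat.card_congr (Equiv.sigmaSubtypeFiberEquivSubtype f fun _ => Iff.rfl), Nat.card_sigma,
    Finset.sum_congr rfl fun h _ => Nat.card_congr (f.fiberEquivKerOfSurjective hf h.1),
    Finset.sum_const, smul_eq_mul, Finset.card_univ, Nat.card_eq_fintype_card (α := Subtype P)]

theorem AddMonoidHom.card_subtype_comp_eq_mul_card_div {G H : Type*} [AddGroup G] [AddGroup H]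
    [Finite G] {f : G →+ H} (hf : Function.Surjective f) (P : H → Prop) :
    (Nat.card {g : G // P (f g)} : ℚ) = Nat.card {h : H // P h} * (Nat.card G / Nat.card H) := by
  have hG := f.card_subtype_comp_of_surjective hf fun _ => True
  simp only [Nat.card_congr (Equiv.subtypeUnivEquiv fun _ => trivial)] at hG
  have : Finite H := .of_surjective f hf
  have hH : (Nat.card H : ℚ) ≠ 0 := by exact_mod_cast Nat.card_pos.ne'
  rw [f.card_subtype_comp_of_surjective hf, hG]
  push_cast
  field_simp

section UnitDiffCount

variable {R S T : Type*} [CommRing R] [CommRing S] [CommRing T]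

theorem unitaryCayley_adj_iff [Nontrivial R] {x y : R} :
    (unitaryCayley R).Adj x y ↔ IsUnit (x - y) :=
  ⟨And.right, fun h => ⟨sub_ne_zero.mp h.ne_zero, h⟩⟩

variable (R) in
noncomputable def unitDiffCount (a b : R) : ℕ :=
  Nat.card {c : R // IsUnit (c - a) ∧ IsUnit (c - b)}

theorem unitDiffCount_of_subsingleton [Subsingleton R] (a b : R) : unitDiffCount R a b = 1 :=
  Nat.card_eq_one_iff_unique.mpr
    ⟨inferInstance, ⟨0, isUnit_of_subsingleton _, isUnit_of_subsingleton _⟩⟩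

theorem unitDiffCount_ringEquiv (e : R ≃+* S) (a b : R) :
    unitDiffCount S (e a) (e b) = unitDiffCount R a b :=
  Nat.card_congr <| .symm <| e.toEquiv.subtypeEquiv fun c => by
    simp only [RingEquiv.toEquiv_eq_coe, EquivLike.coe_coe, ← map_sub, MulEquiv.isUnit_map]

theorem unitDiffCount_prod (a b : S × T) :
    unitDiffCount (S × T) a b = unitDiffCount S a.1 b.1 * unitDiffCount T a.2 b.2 := by
  simp only [unitDiffCount, ← Nat.card_prod]
  refine Nat.card_congr <| (Equiv.subtypeEquivRight fun c => ?_).trans Equiv.subtypeProdEquivProd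
  simp only [Prod.isUnit_iff, Prod.fst_sub, Prod.snd_sub]
  tauto

theorem unitDiffCount_eq_of_surjective [Finite R] {f : R →+* S} (hf : Function.Surjective f)
    (hunit : ∀ x, IsUnit (f x) ↔ IsUnit x) (a b : R) :
    (unitDiffCount R a b : ℚ) = unitDiffCount S (f a) (f b) * (Nat.card R / Nat.card S) := by
  rw [unitDiffCount, unitDiffCount,
    ← AddMonoidHom.card_subtype_comp_eq_mul_card_div (f := f.toAddMonoidHom) hf]
  exact congrArg _ <| Nat.card_congr <| Equiv.subtypeEquivRight fun c => by
    simp [← map_sub, hunit]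

theorem unitDiffCount_field {K : Type*} [Field K] [Fintype K] [DecidableEq K] (a b : K) :
    unitDiffCount K a b = Fintype.card K - if a = b then 1 else 2 := by
  rw [unitDiffCount, Nat.card_eq_fintype_card, Fintype.card_subtype]
  simp only [isUnit_iff_ne_zero, sub_ne_zero]
  rw [show Finset.univ.filter (fun c : K => c ≠ a ∧ c ≠ b) = {a, b}ᶜ by ext; simp,
    Finset.card_compl]
  split_ifs with h
  · simp [h]
  · rw [Finset.card_pair h]

end UnitDiffCount

theorem ZMod.isUnit_castHom_pow_iff {m k : ℕ} [NeZero m] (hk : k ≠ 0) (x : ZMod (m ^ k)) :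
    IsUnit (castHom (dvd_pow_self m hk) (ZMod m) x) ↔ IsUnit x := by
  rw [← natCast_zmod_val x, map_natCast, isUnit_iff_coprime, isUnit_iff_coprime,
    Nat.coprime_pow_right_iff (Nat.pos_of_ne_zero hk)]

theorem unitDiffCount_zmod_mul (a b : ℤ) {m n : ℕ} (h : m.Coprime n) :
    unitDiffCount (ZMod (m * n)) a b =
      unitDiffCount (ZMod m) a b * unitDiffCount (ZMod n) a b := by
  rw [← unitDiffCount_ringEquiv (ZMod.chineseRemainder h), unitDiffCount_prod]
  simp [map_intCast]

theorem unitDiffCount_zmod_prime_pow (a b : ℤ) {p k : ℕ} (hp : p.Prime) (hk : k ≠ 0) :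
    (unitDiffCount (ZMod (p ^ k)) a b : ℚ) =
      p ^ k * (1 - (if (p : ℤ) ∣ a - b then 1 else 2) / p) := by
  have := Fact.mk hp
  rw [unitDiffCount_eq_of_surjective (ZMod.castHom_surjective _) (ZMod.isUnit_castHom_pow_iff hk),
    map_intCast, map_intCast, unitDiffCount_field, ZMod.card, Nat.card_zmod, Nat.card_zmod]
  have hab : (a : ZMod p) = b ↔ (p : ℤ) ∣ a - b := by
    rw [ZMod.intCast_eq_intCast_iff_dvd_sub, dvd_sub_comm]
  simp only [hab]
  have hp2 := hp.two_le
  have hp0 : (p : ℚ) ≠ 0 := by positivity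
  split_ifs <;> push_cast [Nat.cast_sub (by omega : 1 ≤ p), Nat.cast_sub hp2] <;> field_simp

theorem unitaryCayley_common_neighbors (n : ℕ) (hn : 1 < n) (a b : ℤ) :
    (Nat.card {c : ZMod n // (unitaryCayley (ZMod n)).Adj c (a : ZMod n) ∧
        (unitaryCayley (ZMod n)).Adj c (b : ZMod n)} : ℚ) =
      n * ∏ p ∈ n.primeFactors,
        (1 - (if (p : ℤ) ∣ (a - b) then (1 : ℚ) else 2) / p) := by
  have : Nontrivial (ZMod n) := ZMod.nontrivial_iff.mpr hn.ne'
  simp only [unitaryCayley_adj_iff]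
  change (unitDiffCount (ZMod n) a b : ℚ) = _
  rw [Nat.multiplicative_factorization (fun m => (unitDiffCount (ZMod m) a b : ℚ))
      (fun _ _ h => by simp only [unitDiffCount_zmod_mul a b h, Nat.cast_mul])
      (by simp [unitDiffCount_of_subsingleton]) (by omega),
    Finsupp.prod_congr (g2 := fun p k : ℕ => (p : ℚ) ^ k *
      (1 - (if (p : ℤ) ∣ a - b then 1 else 2) / p)) fun p hp => unitDiffCount_zmod_prime_pow a b
      (Nat.prime_of_mem_primeFactors (Nat.support_factorization n ▸ hp))
      (Finsupp.mem_support_iff.mp hp),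
    Finsupp.prod_mul, Finsupp.prod, Finsupp.prod, Nat.support_factorization]
  congr 1
  exact_mod_cast Nat.prod_factorization_pow_eq_self (by omega : n ≠ 0)
end
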